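/- Let w be a uniformly random word in {bH, bC, oH, oC}^s, processed with the convention that an order letter whose required burger type is not present on the stack leaves the stack unchanged. Then the probability that the last letter of w is oC and that the topmost burger on the stack just before the last letter is a cheeseburger converges to 1/8 as s → ∞; moreover, the deviation of this probability from 1/8 is O(1/√s). -/

import Mathlib

open scoped Classical

inductive Burger : Type
  | ham | cheese
  deriving DecidableEq

instance instFintypeBurger : Fintype Burger :=
  ⟨{.ham, .cheese}, fun x => by cases x <;> simp⟩

inductive Letter : Type
  | bH | bC | oH | oC
  deriving DecidableEq

instance instFintypeLetter : Fintype Letter :=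
  ⟨{.bH, .bC, .oH, .oC}, fun x => by cases x <;> simp⟩

/-- Remove the topmost burger of type `b` from the stack (the head of the list
is the top of the stack); `none` if there is no such burger. -/
def removeTopmost (b : Burger) : List Burger → Option (List Burger)
  | [] => none
  | c :: st => if c = b then some st else (removeTopmost b st).map (c :: ·)

/-- Lenient processing of a single letter: productions push onto the stack,
orders remove the topmost burger of their type if one is present and otherwise
leave the stack unchanged. -/
def stepL (st : List Burger) : Letter → List Burger
  | .bH => .ham :: st
  | .bC => .cheese :: st
  | .oH => (removeTopmost .ham st).getD st
  | .oC => (removeTopmost .cheese st).getD st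

/-- The stack after leniently processing the first `i` letters of `w`. -/
def stackLAt (w : List Letter) (i : ℕ) : List Burger :=
  (w.take i).foldl stepL []

/-- The probability that, for a uniformly random word of length `s`, the last
letter is oC and the top burger on the stack just before it is a cheeseburger. -/
noncomputable def lastFreshCheeseProb (s : ℕ) : ℝ :=
  ((Finset.univ.filter fun w : Fin s → Letter =>
      (List.ofFn w).getLast? = some Letter.oC ∧
      (stackLAt (List.ofFn w) (s - 1)).head? = some Burger.cheese).card : ℝ)
    / (4 : ℝ) ^ s

/-!
Conditioning on the last letter, the probability is a quarter of the probability that the stack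
after `s - 1` letters is topped by a cheeseburger. Exchanging hamburgers and cheeseburgers is a
bijection on words that commutes with the lenient processing, so a nonempty stack is topped by a
cheeseburger exactly half of the time, and the probability is `1/8 - P(empty stack)/8`.

An order removes at most one burger, so if the final stack is empty then every suffix of the word
contains at least as many orders as productions. By the ballot recursion there are
`2^n * C(n, ⌈n/2⌉)` such words of length `n`, and `(n + 1) * C(n, ⌈n/2⌉)^2 ≤ 4^n`, so the
empty-stack probability is at most `1/√(n + 1)`.
-/

open Finset

section WordCount

variable {α β : Type*} [Fintype α]

noncomputable def wordCount (n : ℕ) (P : List α → Prop) : ℕ :=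
  #{w : Fin n → α | P (List.ofFn w)}

theorem wordCount_congr {n : ℕ} {P Q : List α → Prop}
    (h : ∀ w : List α, w.length = n → (P w ↔ Q w)) : wordCount n P = wordCount n Q := by
  unfold wordCount
  congr 1
  exact filter_congr fun _ _ ↦ h _ List.length_ofFn

theorem wordCount_le_wordCount {n : ℕ} {P Q : List α → Prop}
    (h : ∀ w : List α, w.length = n → P w → Q w) : wordCount n P ≤ wordCount n Q :=
  card_le_card <| monotone_filter_right _ fun _ _ ↦ h _ List.length_ofFn

theorem wordCount_zero (P : List α → Prop) : wordCount 0 P = if P [] then 1 else 0 := by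
  unfold wordCount
  split_ifs with h <;> simp [h]

theorem wordCount_succ_cons (n : ℕ) (P : List α → Prop) :
    wordCount (n + 1) P = ∑ a, wordCount n (fun w ↦ P (a :: w)) := by
  simp only [wordCount, card_filter]
  rw [← (Fin.consEquiv fun _ ↦ α).sum_comp, Fintype.sum_prod_type]
  simp [List.ofFn_succ, Fin.consEquiv_apply]

theorem wordCount_succ_append (n : ℕ) (P : List α → Prop) :
    wordCount (n + 1) P = ∑ a, wordCount n (fun w ↦ P (w ++ [a])) := by
  simp only [wordCount, card_filter]
  rw [← (Fin.snocEquiv fun _ ↦ α).sum_comp, Fintype.sum_prod_type]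
  simp only [Fin.snocEquiv_apply, List.ofFn_succ', Fin.snoc_castSucc, Fin.snoc_last,
    List.concat_eq_append]

theorem wordCount_map [Fintype β] (e : α ≃ β) (n : ℕ) (P : List β → Prop) :
    wordCount n (fun w ↦ P (w.map e)) = wordCount n P := by
  simp only [wordCount, card_filter]
  exact Fintype.sum_equiv ((Equiv.refl (Fin n)).arrowCongr e) _ _ fun w ↦ by
    simp only [List.map_ofFn]; rfl

theorem sum_wordCount_eq_card_pow [Fintype β] (n : ℕ) (f : List α → β) :
    ∑ b, wordCount n (fun w ↦ f w = b) = Fintype.card α ^ n := by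
  have := card_eq_sum_card_fiberwise (f := fun w : Fin n → α ↦ f (List.ofFn w))
    (s := univ) (t := univ) (fun _ _ ↦ mem_univ _)
  simpa [Fintype.card_fun, wordCount] using this.symm

end WordCount

namespace Burger

def swap : Burger → Burger
  | ham => cheese
  | cheese => ham

theorem sum_univ {M : Type*} [AddCommMonoid M] (f : Burger → M) :
    ∑ b, f b = f ham + f cheese := by
  simp [Finset.univ, Fintype.elems]

end Burger

namespace Letter

def isOrder : Letter → Bool
  | oH | oC => true
  | bH | bC => false

def swap : Letter → Letter
  | bH => bC
  | bC => bH
  | oH => oC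
  | oC => oH

theorem swap_involutive : Function.Involutive swap := by
  intro a; cases a <;> rfl

theorem sum_univ {M : Type*} [AddCommMonoid M] (f : Letter → M) :
    ∑ a, f a = f bH + f bC + f oH + f oC := by
  simp [Finset.univ, Fintype.elems, add_assoc]

end Letter

theorem removeTopmost_map_swap (b : Burger) (st : List Burger) :
    removeTopmost b.swap (st.map Burger.swap) =
      (removeTopmost b st).map (List.map Burger.swap) := by
  induction st with
  | nil => rfl
  | cons c st ih =>
    cases b <;> cases c <;> simp_all [removeTopmost, Burger.swap, Option.map_map] <;> rfl

theorem stepL_map_swap (st : List Burger) (a : Letter) :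
    stepL (st.map Burger.swap) a.swap = (stepL st a).map Burger.swap := by
  have ham := removeTopmost_map_swap .ham st
  have cheese := removeTopmost_map_swap .cheese st
  simp only [Burger.swap] at ham cheese
  cases a
  · rfl
  · rfl
  · simp only [stepL, Letter.swap, ham]; cases removeTopmost .ham st <;> rfl
  · simp only [stepL, Letter.swap, cheese]; cases removeTopmost .cheese st <;> rfl

theorem foldl_stepL_map_swap (w : List Letter) (st : List Burger) :
    (w.map Letter.swap).foldl stepL (st.map Burger.swap) = (w.foldl stepL st).map Burger.swap := by
  induction w generalizing st with
  | nil => rfl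
  | cons a w ih => simp [stepL_map_swap, ih]

theorem length_removeTopmost {b : Burger} {st st' : List Burger}
    (h : removeTopmost b st = some st') : st'.length + 1 = st.length := by
  induction st generalizing st' with
  | nil => simp [removeTopmost] at h
  | cons c st ih =>
    rw [removeTopmost] at h
    split_ifs at h
    · cases h; rfl
    · obtain ⟨u, hu, rfl⟩ := Option.map_eq_some_iff.mp h
      simp [← ih hu]

theorem length_add_one_le_length_stepL (st : List Burger) (a : Letter) :
    st.length + 1 ≤ (stepL st a).length + 2 * (if a.isOrder then 1 else 0) := by
  cases a <;> simp only [stepL, Letter.isOrder] <;> try simp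
  all_goals
    cases h : removeTopmost _ st with
    | none => simp
    | some st' => simp [← length_removeTopmost h]

theorem length_add_length_le_length_foldl_stepL (w : List Letter) (st : List Burger) :
    st.length + w.length ≤ (w.foldl stepL st).length + 2 * w.countP Letter.isOrder := by
  induction w generalizing st with
  | nil => simp
  | cons a w ih =>
    have h₁ := ih (stepL st a)
    have h₂ := length_add_one_le_length_stepL st a
    rw [List.foldl_cons, List.length_cons, List.countP_cons]
    omega

def OrdersDominateSuffixes (w : List Letter) : Prop :=
  ∀ v, v <:+ w → v.length ≤ 2 * v.countP Letter.isOrder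

theorem OrdersDominateSuffixes.length_le {w : List Letter} (h : OrdersDominateSuffixes w) :
    w.length ≤ 2 * w.countP Letter.isOrder :=
  h w List.suffix_rfl

theorem ordersDominateSuffixes_nil : OrdersDominateSuffixes [] := by
  simp [OrdersDominateSuffixes]

theorem ordersDominateSuffixes_cons {a : Letter} {w : List Letter} :
    OrdersDominateSuffixes (a :: w) ↔
      (a :: w).length ≤ 2 * (a :: w).countP Letter.isOrder ∧ OrdersDominateSuffixes w := by
  simp only [OrdersDominateSuffixes, List.suffix_cons_iff, forall_eq_or_imp]

theorem ordersDominateSuffixes_of_foldl_stepL_eq_nil {w : List Letter}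
    (h : w.foldl stepL [] = []) : OrdersDominateSuffixes w := by
  rintro v ⟨u, rfl⟩
  have := length_add_length_le_length_foldl_stepL v (u.foldl stepL [])
  rw [← List.foldl_append, h] at this
  simpa using this.trans' (Nat.le_add_left _ _)

theorem wordCount_ordersDominateSuffixes_and_le_countP {n k : ℕ} (hk : n ≤ 2 * k) :
    wordCount n (fun w ↦ OrdersDominateSuffixes w ∧ k ≤ w.countP Letter.isOrder) =
      2 ^ n * n.choose k := by
  induction n generalizing k with
  | zero => cases k <;> simp [wordCount_zero, ordersDominateSuffixes_nil]
  | succ n ih =>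
    obtain ⟨j, rfl⟩ : ∃ j, k = j + 1 := ⟨k - 1, by omega⟩
    have production (a : Letter) (ha : a.isOrder = false) :
        wordCount n (fun w ↦
            OrdersDominateSuffixes (a :: w) ∧ j + 1 ≤ (a :: w).countP Letter.isOrder) =
          2 ^ n * n.choose (j + 1) := by
      rw [← ih (by omega)]
      refine wordCount_congr fun w hw ↦ ?_
      simp only [ordersDominateSuffixes_cons, List.countP_cons, ha, List.length_cons, hw,
        Bool.false_eq_true, ↓reduceIte, add_zero]
      exact ⟨fun ⟨⟨_, hD⟩, hj⟩ ↦ ⟨hD, hj⟩, fun ⟨hD, hj⟩ ↦ ⟨⟨by omega, hD⟩, hj⟩⟩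
    have order (a : Letter) (ha : a.isOrder = true) :
        wordCount n (fun w ↦
            OrdersDominateSuffixes (a :: w) ∧ j + 1 ≤ (a :: w).countP Letter.isOrder) =
          2 ^ n * n.choose j := by
      have drop_order : ∀ w : List Letter, w.length = n →
          (OrdersDominateSuffixes (a :: w) ∧ j + 1 ≤ (a :: w).countP Letter.isOrder ↔
            OrdersDominateSuffixes w ∧ j ≤ w.countP Letter.isOrder) := fun w hw ↦ by
        simp only [ordersDominateSuffixes_cons, List.countP_cons, ha, List.length_cons, hw,
          ↓reduceIte]
        exact ⟨fun ⟨⟨_, hD⟩, hj⟩ ↦ ⟨hD, by omega⟩,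
          fun ⟨hD, hj⟩ ↦ ⟨⟨by have := hD.length_le; omega, hD⟩, by omega⟩⟩
      rw [wordCount_congr drop_order]
      rcases Nat.lt_or_ge (2 * j) n with hn | hn
      · obtain rfl : n = 2 * j + 1 := by omega
        have strengthen : ∀ w : List Letter, w.length = 2 * j + 1 →
            (OrdersDominateSuffixes w ∧ j ≤ w.countP Letter.isOrder ↔
              OrdersDominateSuffixes w ∧ j + 1 ≤ w.countP Letter.isOrder) := fun w hw ↦
          ⟨fun ⟨hD, _⟩ ↦ ⟨hD, by have := hD.length_le; omega⟩, fun ⟨hD, hj⟩ ↦ ⟨hD, by omega⟩⟩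
        rw [wordCount_congr strengthen, ih (by omega), Nat.choose_symm_half]
      · exact ih hn
    rw [wordCount_succ_cons, Letter.sum_univ, production .bH rfl, production .bC rfl,
      order .oH rfl, order .oC rfl, Nat.choose_succ_succ', pow_succ]
    ring

theorem wordCount_foldl_stepL_eq_nil_le (n : ℕ) :
    wordCount n (fun w ↦ w.foldl stepL [] = []) ≤ 2 ^ n * n.choose ((n + 1) / 2) := by
  rw [← wordCount_ordersDominateSuffixes_and_le_countP (by omega)]
  refine wordCount_le_wordCount fun w _ h ↦ ?_
  have hD := ordersDominateSuffixes_of_foldl_stepL_eq_nil h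
  exact ⟨hD, by have := hD.length_le; omega⟩

theorem wordCount_head_cheese_eq_head_ham (n : ℕ) :
    wordCount n (fun w ↦ (w.foldl stepL []).head? = some .cheese) =
      wordCount n (fun w ↦ (w.foldl stepL []).head? = some .ham) := by
  rw [← wordCount_map (Letter.swap_involutive.toPerm _)]
  refine wordCount_congr fun w _ ↦ ?_
  have := foldl_stepL_map_swap w []
  simp only [List.map_nil] at this
  simp only [Function.Involutive.coe_toPerm, this, List.head?_map]
  cases (w.foldl stepL []).head? with
  | none => simp
  | some b => cases b <;> simp [Burger.swap]

theorem two_mul_wordCount_head_cheese_add_wordCount_nil (n : ℕ) :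
    2 * wordCount n (fun w ↦ (w.foldl stepL []).head? = some .cheese) +
      wordCount n (fun w ↦ w.foldl stepL [] = []) = 4 ^ n := by
  have := sum_wordCount_eq_card_pow n fun w ↦ (w.foldl stepL []).head?
  simp only [Fintype.sum_option, Burger.sum_univ, List.head?_eq_none_iff,
    ← wordCount_head_cheese_eq_head_ham] at this
  rw [show (4 : ℕ) = Fintype.card Letter from rfl, ← this]
  ring

theorem lastFreshCheeseProb_succ (n : ℕ) :
    lastFreshCheeseProb (n + 1) =
      wordCount n (fun w ↦ (w.foldl stepL []).head? = some .cheese) / 4 ^ (n + 1) := by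
  have hcount : lastFreshCheeseProb (n + 1) = wordCount (n + 1) (fun w ↦
      w.getLast? = some .oC ∧ (stackLAt w n).head? = some .cheese) / 4 ^ (n + 1) := by
    rw [lastFreshCheeseProb, wordCount]
    congr
  rw [hcount, wordCount_succ_append, Letter.sum_univ]
  simp only [List.getLast?_append, List.getLast?_singleton]
  simp [stackLAt, wordCount]

theorem two_mul_add_one_mul_centralBinom_sq_le (m : ℕ) :
    (2 * m + 1) * m.centralBinom ^ 2 ≤ 4 ^ (2 * m) := by
  induction m with
  | zero => simp
  | succ m ih =>
    refine Nat.le_of_mul_le_mul_left (c := (m + 1) ^ 2) ?_ (by positivity)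
    have hm : (2 * m + 3) * (2 * m + 1) ≤ 4 * (m + 1) ^ 2 := by ring_nf; omega
    calc (m + 1) ^ 2 * ((2 * (m + 1) + 1) * (m + 1).centralBinom ^ 2)
        = (2 * m + 3) * ((m + 1) * (m + 1).centralBinom) ^ 2 := by ring
      _ = (2 * m + 3) * (2 * m + 1) * (4 * ((2 * m + 1) * m.centralBinom ^ 2)) := by
        rw [Nat.succ_mul_centralBinom_succ]; ring
      _ ≤ 4 * (m + 1) ^ 2 * (4 * 4 ^ (2 * m)) := by gcongr
      _ = (m + 1) ^ 2 * 4 ^ (2 * (m + 1)) := by ring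

theorem succ_mul_choose_half_sq_le (n : ℕ) : (n + 1) * n.choose ((n + 1) / 2) ^ 2 ≤ 4 ^ n := by
  obtain ⟨m, rfl | rfl⟩ := Nat.even_or_odd' n
  · rw [show (2 * m + 1) / 2 = m by omega, ← Nat.centralBinom_eq_two_mul_choose]
    exact two_mul_add_one_mul_centralBinom_sq_le m
  · have hcb : (m + 1).centralBinom = 2 * (2 * m + 1).choose (m + 1) := by
      rw [Nat.centralBinom_eq_two_mul_choose, show 2 * (m + 1) = 2 * m + 1 + 1 by ring,
        Nat.choose_succ_succ', Nat.choose_symm_half]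
      ring
    have := two_mul_add_one_mul_centralBinom_sq_le (m + 1)
    rw [hcb] at this
    rw [show (2 * m + 1 + 1) / 2 = m + 1 by omega]
    refine Nat.le_of_mul_le_mul_left (c := 4) ?_ (by norm_num)
    calc 4 * ((2 * m + 1 + 1) * (2 * m + 1).choose (m + 1) ^ 2)
        ≤ (2 * (m + 1) + 1) * (2 * (2 * m + 1).choose (m + 1)) ^ 2 := by ring_nf; omega
      _ ≤ 4 ^ (2 * (m + 1)) := this
      _ = 4 * 4 ^ (2 * m + 1) := by ring

theorem choose_half_div_two_pow_le (n : ℕ) :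
    (n.choose ((n + 1) / 2) : ℝ) / 2 ^ n ≤ 1 / √(n + 1) := by
  have hsqrt : 0 < √((n : ℝ) + 1) := Real.sqrt_pos.mpr (by positivity)
  rw [div_le_div_iff₀ (by positivity) hsqrt, one_mul]
  refine (pow_le_pow_iff_left₀ (by positivity) (by positivity) two_ne_zero).mp ?_
  rw [mul_pow, Real.sq_sqrt (by positivity), ← pow_mul, mul_comm n, pow_mul]
  exact_mod_cast (mul_comm _ _).trans_le (succ_mul_choose_half_sq_le n) |>.trans_eq (by norm_num)

theorem abs_lastFreshCheeseProb_succ_sub_le (n : ℕ) :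
    |lastFreshCheeseProb (n + 1) - 1 / 8| ≤ 1 / 8 / √(n + 1) := by
  rw [lastFreshCheeseProb_succ]
  set c := wordCount n (fun w ↦ (w.foldl stepL []).head? = some .cheese)
  set e := wordCount n (fun w ↦ w.foldl stepL [] = [])
  have hsum : 2 * (c : ℝ) + e = 4 ^ n := by
    exact_mod_cast two_mul_wordCount_head_cheese_add_wordCount_nil n
  have he : (e : ℝ) ≤ 2 ^ n * n.choose ((n + 1) / 2) := by
    exact_mod_cast wordCount_foldl_stepL_eq_nil_le n
  have h4 : (4 : ℝ) ^ n = 2 ^ n * 2 ^ n := by rw [← mul_pow]; norm_num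
  have hdev : (c : ℝ) / 4 ^ (n + 1) - 1 / 8 = -(e / 4 ^ n / 8) := by
    rw [pow_succ]
    field_simp
    linarith
  rw [hdev, abs_neg, abs_of_nonneg (by positivity)]
  calc (e : ℝ) / 4 ^ n / 8 ≤ 2 ^ n * n.choose ((n + 1) / 2) / 4 ^ n / 8 := by gcongr
    _ = (n.choose ((n + 1) / 2) : ℝ) / 2 ^ n / 8 := by rw [h4]; field_simp
    _ ≤ 1 / √(n + 1) / 8 :=
      div_le_div_of_nonneg_right (choose_half_div_two_pow_le n) (by norm_num)
    _ = 1 / 8 / √(n + 1) := by ring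

theorem lastFreshCheeseProb_tendsto :
    Filter.Tendsto lastFreshCheeseProb Filter.atTop (nhds (1 / 8)) ∧
    ∃ c : ℝ, 0 < c ∧ ∀ s : ℕ, 1 ≤ s →
      |lastFreshCheeseProb s - 1 / 8| ≤ c / Real.sqrt s := by
  have hdev : ∀ s : ℕ, 1 ≤ s → |lastFreshCheeseProb s - 1 / 8| ≤ 1 / 8 / Real.sqrt s := by
    intro s hs
    obtain ⟨n, rfl⟩ := Nat.exists_eq_add_of_le' hs
    exact_mod_cast abs_lastFreshCheeseProb_succ_sub_le n
  refine ⟨?_, 1 / 8, by norm_num, hdev⟩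
  have hbound : Filter.Tendsto (fun s : ℕ ↦ 1 / 8 / Real.sqrt s) Filter.atTop (nhds 0) :=
    tendsto_const_nhds.div_atTop (Real.tendsto_sqrt_atTop.comp tendsto_natCast_atTop_atTop)
  exact tendsto_sub_nhds_zero_iff.mp
    (squeeze_zero_norm' (Filter.eventually_atTop.mpr ⟨1, hdev⟩) hbound)
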